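/- arXiv:2007.13132 — 2 statements merged into one kernel-verified Lean document; each statement's English description precedes it below -/
import Mathlib

section
/- Let n ≥ 3 and let f be a minimum-weight Italian dominating function of C₃ □ C_n. For 1 ≤ k ≤ n let a_k = Σ_{j=1}^{3} f((j,k)). Then a_k ≥ 1 for every k. -/
/-- An Italian dominating function on a digraph given by adjacency relation `adj`:
`f : V → {0,1,2}` such that every vertex with value 0 has an in-neighbor with value 2
or two distinct in-neighbors with value 1. -/
def IsIDF {V : Type*} (adj : V → V → Prop) (f : V → ℕ) : Prop :=
  (∀ v, f v ≤ 2) ∧ ∀ v, f v = 0 →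
    (∃ w, adj w v ∧ f w = 2) ∨
    (∃ w₁ w₂, w₁ ≠ w₂ ∧ adj w₁ v ∧ adj w₂ v ∧ f w₁ = 1 ∧ f w₂ = 1)

/-- The Italian domination number: minimum weight of an Italian dominating function. -/
noncomputable def italianDomNum (V : Type*) [Fintype V] (adj : V → V → Prop) : ℕ :=
  sInf {w : ℕ | ∃ f : V → ℕ, IsIDF adj f ∧ ∑ v, f v = w}

/-- The directed cycle on `n` vertices: arc `i → i+1 (mod n)`. -/
def cycleAdj (n : ℕ) (i j : Fin n) : Prop := (j : ℕ) = ((i : ℕ) + 1) % n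

/-- Cartesian product of digraphs. -/
def cartAdj {α β : Type*} (A : α → α → Prop) (B : β → β → Prop) (x y : α × β) : Prop :=
  (x.1 = y.1 ∧ B x.2 y.2) ∨ (A x.1 y.1 ∧ x.2 = y.2)

/-- Strong product of digraphs. -/
def strongAdj {α β : Type*} (A : α → α → Prop) (B : β → β → Prop) (x y : α × β) : Prop :=
  (A x.1 y.1 ∧ B x.2 y.2) ∨ (x.1 = y.1 ∧ B x.2 y.2) ∨ (A x.1 y.1 ∧ x.2 = y.2)

/-- Maximum out-degree of a finite digraph. -/
noncomputable def maxOutDeg (V : Type*) [Fintype V] (adj : V → V → Prop) : ℕ :=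
  Finset.univ.sup fun v => Nat.card {w | adj v w}

/-- Maximum in-degree of a finite digraph. -/
noncomputable def maxInDeg (V : Type*) [Fintype V] (adj : V → V → Prop) : ℕ :=
  Finset.univ.sup fun v => Nat.card {w | adj w v}

/-! If some column `{(x, k)}` of a minimum Italian dominating function on `D □ Cₙ`
carried no weight, each `(x, k)` could only be dominated from its unique in-neighbour `(x, k - 1)`
outside the column, so the whole column `k - 1` carries the value `2`. Moving one unit
of weight from `(x, k - 1)` to `(x, k)` and discarding another gives an Italian
dominating function of smaller weight, provided `x` has an in-neighbour `y ≠ x` in `D`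
(which keeps `(x, k - 1)` dominated by `(y, k - 1)`). -/

open Finset

lemma Finset.sum_update_add {ι : Type*} [Fintype ι] [DecidableEq ι] (f : ι → ℕ) (i : ι)
    (b : ℕ) : ∑ x, Function.update f i b x + f i = ∑ x, f x + b := by
  rw [sum_update_of_mem (mem_univ i), sum_eq_add_sum_sdiff_singleton_of_mem (mem_univ i) f]
  ring

lemma italianDomNum_le {V : Type*} [Fintype V] {adj : V → V → Prop} {g : V → ℕ}
    (hg : IsIDF adj g) : italianDomNum V adj ≤ ∑ v, g v :=
  Nat.sInf_le ⟨g, hg, rfl⟩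

lemma IsIDF.eq_two_of_unique_nonzero_inNeighbor {V : Type*} {adj : V → V → Prop}
    {f : V → ℕ} (hf : IsIDF adj f) {u v : V} (hv : f v = 0)
    (hu : ∀ w, adj w v → f w ≠ 0 → w = u) : f u = 2 := by
  rcases hf.2 v hv with ⟨w, hwv, hw⟩ | ⟨w₁, w₂, hne, hw₁v, hw₂v, hw₁, hw₂⟩
  · rwa [← hu w hwv (by omega)]
  · exact absurd ((hu w₁ hw₁v (by omega)).trans (hu w₂ hw₂v (by omega)).symm) hne

lemma cycleAdj_iff {n : ℕ} [NeZero n] (a c : Fin n) : cycleAdj n a c ↔ c = a + 1 := by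
  rw [cycleAdj, Fin.ext_iff, Fin.val_add, Fin.val_one', Nat.add_mod_mod]

section CartCycle

variable {α : Type*} {A : α → α → Prop} {n : ℕ} [NeZero n] {f : α × Fin n → ℕ}

lemma cartAdj_cycleAdj_iff {w : α × Fin n} {x : α} {k : Fin n} :
    cartAdj A (cycleAdj n) w (x, k) ↔ w = (x, k - 1) ∨ A w.1 x ∧ w.2 = k := by
  obtain ⟨y, l⟩ := w
  simp only [cartAdj, cycleAdj_iff, Prod.mk.injEq, eq_sub_iff_add_eq]
  tauto

lemma IsIDF.eq_two_of_column_eq_zero (hf : IsIDF (cartAdj A (cycleAdj n)) f) {k : Fin n}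
    (hk : ∀ x, f (x, k) = 0) (x : α) : f (x, k - 1) = 2 := by
  refine hf.eq_two_of_unique_nonzero_inNeighbor (hk x) fun w hw hw0 => ?_
  obtain ⟨y, l⟩ := w
  rcases cartAdj_cycleAdj_iff.1 hw with h | ⟨-, rfl⟩
  · exact h
  · exact absurd (hk y) hw0

lemma IsIDF.update_of_column_eq_zero [DecidableEq α] (hf : IsIDF (cartAdj A (cycleAdj n)) f)
    {k : Fin n} (hk : ∀ x, f (x, k) = 0) (hk1 : k - 1 ≠ k) {x y : α} (hyx : A y x)
    (hne : y ≠ x) :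
    IsIDF (cartAdj A (cycleAdj n))
      (Function.update (Function.update f (x, k - 1) 0) (x, k) 1) := by
  set g := Function.update (Function.update f (x, k - 1) 0) (x, k) 1
  have hab : (x, k - 1) ≠ (x, k) := fun h => hk1 (congrArg Prod.snd h)
  have htwo := hf.eq_two_of_column_eq_zero hk
  have hga : g (x, k - 1) = 0 := by simp [g, hab]
  have hgb : g (x, k) = 1 := by simp [g]
  have hg : ∀ w, w ≠ (x, k - 1) → w ≠ (x, k) → g w = f w := fun w ha hb => by
    simp [g, ha, hb]
  refine ⟨fun v => ?_, fun v hv => ?_⟩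
  · by_cases hva : v = (x, k - 1)
    · simp [hva, hga]
    by_cases hvb : v = (x, k)
    · simp [hvb, hgb]
    rw [hg v hva hvb]
    exact hf.1 v
  by_cases hva : v = (x, k - 1)
  · refine Or.inl ⟨(y, k - 1), hva ▸ Or.inr ⟨hyx, rfl⟩, ?_⟩
    rw [hg _ (by simp [hne]) (by simp [hk1])]
    exact htwo y
  have hvb : v ≠ (x, k) := by rintro rfl; simp [hgb] at hv
  rw [hg v hva hvb] at hv
  rcases hf.2 v hv with ⟨w, hwv, hw⟩ | ⟨w₁, w₂, hw₁₂, hw₁v, hw₂v, hw₁, hw₂⟩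
  · have hwa : w ≠ (x, k - 1) := by
      rintro rfl
      obtain ⟨z, l⟩ := v
      rcases hwv with ⟨rfl, hl⟩ | ⟨-, rfl⟩
      · rw [cycleAdj_iff, sub_add_cancel] at hl
        exact hvb (hl ▸ rfl)
      · simp [htwo z] at hv
    have hwb : w ≠ (x, k) := by rintro rfl; simp [hk x] at hw
    exact Or.inl ⟨w, hwv, (hg w hwa hwb).trans hw⟩
  · have hg_one : ∀ w, f w = 1 → g w = 1 := fun w hw =>
      (hg w (by rintro rfl; simp [htwo x] at hw) (by rintro rfl; simp [hk x] at hw)).trans hw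
    exact Or.inr ⟨w₁, w₂, hw₁₂, hw₁v, hw₂v, hg_one w₁ hw₁, hg_one w₂ hw₂⟩

theorem one_le_column_sum_of_italianDomNum [Fintype α] (hA : ∃ x y, A y x ∧ y ≠ x)
    (hf : IsIDF (cartAdj A (cycleAdj n)) f)
    (hmin : ∑ p, f p = italianDomNum (α × Fin n) (cartAdj A (cycleAdj n))) (k : Fin n) :
    1 ≤ ∑ x, f (x, k) := by
  classical
  by_contra! hsum
  have hk : ∀ x, f (x, k) = 0 := fun x =>
    (sum_eq_zero_iff.1 (Nat.lt_one_iff.1 hsum)) x (mem_univ x)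
  have htwo := hf.eq_two_of_column_eq_zero hk
  obtain ⟨x, y, hyx, hne⟩ := hA
  by_cases hk1 : k - 1 = k
  · -- `n = 1`: column `k - 1` is column `k` itself
    have := htwo x
    rw [hk1, hk x] at this
    omega
  have hweight : ∑ p, Function.update (Function.update f (x, k - 1) 0) (x, k) 1 p + 1 =
      ∑ p, f p := by
    have hab : (x, k) ≠ (x, k - 1) := fun h => hk1 (congrArg Prod.snd h).symm
    have h₁ := Finset.sum_update_add (Function.update f (x, k - 1) 0) (x, k) 1
    have h₂ := Finset.sum_update_add f (x, k - 1) 0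
    rw [Function.update_of_ne hab, hk x] at h₁
    rw [htwo x] at h₂
    omega
  have hle := italianDomNum_le (hf.update_of_column_eq_zero hk hk1 hyx hne)
  omega

end CartCycle

theorem stmt11_general (n : ℕ) (f : Fin 3 × Fin n → ℕ)
    (hf : IsIDF (cartAdj (cycleAdj 3) (cycleAdj n)) f)
    (hmin : (∑ p, f p) = italianDomNum (Fin 3 × Fin n) (cartAdj (cycleAdj 3) (cycleAdj n))) :
    ∀ k : Fin n, 1 ≤ ∑ j : Fin 3, f (j, k) := by
  intro k
  have : NeZero n := ⟨k.pos.ne'⟩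
  exact one_le_column_sum_of_italianDomNum ⟨1, 0, rfl, by decide⟩ hf hmin k

theorem stmt11 (n : ℕ) (hn : 3 ≤ n) (f : Fin 3 × Fin n → ℕ)
    (hf : IsIDF (cartAdj (cycleAdj 3) (cycleAdj n)) f)
    (hmin : (∑ p, f p) = italianDomNum (Fin 3 × Fin n) (cartAdj (cycleAdj 3) (cycleAdj n))) :
    ∀ k : Fin n, 1 ≤ ∑ j : Fin 3, f (j, k) :=
  stmt11_general n f hf hmin
end

section
/- For all integers m, n ≥ 2, the Italian domination number of the strong product of directed cycles equals γ_I(C_m ⊗ C_n) = ⌈mn/2⌉. -/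
/-!
Lower bound: if `f (i, j) = 0`, the three in-neighbours `(i-1, j-1)`, `(i, j-1)`, `(i-1, j)`
carry weight at least 2. A potential argument along the band of rows `i - 1`, `i` turns this into
"the band weighs at least `n`"; summing over `i` counts every row twice, so `m n ≤ 2 w(f)`.

Upper bound: the checkerboard `f (i, j) = [i + j even]` has weight `⌈m n / 2⌉`, and a vertex with
`i + j` odd has at least two in-neighbours with `i + j` even, also across the wrap-around.
-/

open Finset

section ItalianDomination

variable {V : Type*} {adj : V → V → Prop} {f : V → ℕ}

theorem IsIDF.two_le_sum (hf : IsIDF adj f) {v : V} (hv : f v = 0) {s : Finset V}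
    (hs : ∀ w, adj w v → w ∈ s) : 2 ≤ ∑ w ∈ s, f w := by
  classical
  rcases hf.2 v hv with ⟨w, hw, hw₂⟩ | ⟨w₁, w₂, hne, hw₁, hw₂, h₁, h₂⟩
  · calc 2 = f w := hw₂.symm
      _ ≤ ∑ w ∈ s, f w := single_le_sum (fun _ _ => Nat.zero_le _) (hs w hw)
  · calc 2 = ∑ w ∈ {w₁, w₂}, f w := by rw [sum_pair hne, h₁, h₂]
      _ ≤ ∑ w ∈ s, f w := sum_le_sum_of_subset (by simp [insert_subset_iff, hs _ hw₁, hs _ hw₂])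

theorem isIDF_of_two_le_sum (hf : ∀ v, f v ≤ 1)
    (h : ∀ v, f v = 0 → ∃ s : Finset V, (∀ w ∈ s, adj w v) ∧ 2 ≤ ∑ w ∈ s, f w) :
    IsIDF adj f := by
  refine ⟨fun v => (hf v).trans one_le_two, fun v hv => Or.inr ?_⟩
  obtain ⟨s, hs, hsum⟩ := h v hv
  have hcard : 1 < #(s.filter (f · = 1)) := by
    rw [card_filter]
    calc 1 < ∑ w ∈ s, f w := hsum
      _ = ∑ w ∈ s, if f w = 1 then 1 else 0 :=
        sum_congr rfl fun w _ => by have := hf w; split <;> omega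
  obtain ⟨w₁, h₁, w₂, h₂, hne⟩ := one_lt_card.1 hcard
  rw [mem_filter] at h₁ h₂
  exact ⟨w₁, w₂, hne, hs _ h₁.1, hs _ h₂.1, h₁.2, h₂.2⟩

theorem italianDomNum_eq_of_isIDF [Fintype V] {k : ℕ} (hlow : ∀ g, IsIDF adj g → k ≤ ∑ v, g v)
    (hf : IsIDF adj f) (hk : ∑ v, f v = k) : italianDomNum V adj = k :=
  le_antisymm (Nat.sInf_le ⟨f, hf, hk⟩)
    (le_csInf ⟨k, f, hf, hk⟩ (by rintro _ ⟨g, hg, rfl⟩; exact hlow g hg))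

end ItalianDomination

theorem card_le_sum_add_of_perm {ι : Type*} [Fintype ι] (σ : Equiv.Perm ι) (a b : ι → ℕ)
    (h : ∀ j, b j = 0 → 2 ≤ a (σ j) + a j + b (σ j)) :
    Fintype.card ι ≤ ∑ j, (a j + b j) := by
  -- `φ j = 1` iff column `j` weighs at least 2; the `φ`-terms cancel in the sum of `step`.
  set φ : ι → ℕ := fun j => min (a j + b j) 2 / 2 with hφ
  have step : ∀ j, 1 + φ j ≤ a j + b j + φ (σ j) := by
    intro j
    by_cases hb : b j = 0
    · have := h j hb; simp only [hφ]; omega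
    · simp only [hφ]; omega
  have hsum := sum_le_sum fun j (_ : j ∈ univ) => step j
  rw [sum_add_distrib, sum_add_distrib, Equiv.sum_comp σ φ, sum_const, card_univ,
    smul_eq_mul, mul_one] at hsum
  omega

section Cycle

variable {k : ℕ} [NeZero k]

theorem cycleAdj_iff_s14 {i j : Fin k} : cycleAdj k i j ↔ i = j - 1 := by
  rw [eq_sub_iff_add_eq, eq_comm, Fin.ext_iff, Fin.val_add, Fin.val_one', Nat.add_mod_mod]
  rfl

theorem Fin.val_sub_one_eq_ite (i : Fin k) :
    ((i - 1 : Fin k) : ℕ) = if (i : ℕ) = 0 then k - 1 else i - 1 := by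
  obtain ⟨k, rfl⟩ := Nat.exists_eq_succ_of_ne_zero (NeZero.ne k)
  rw [Fin.coe_sub_one]
  simp only [Fin.ext_iff, Fin.val_zero, Nat.succ_sub_one]

theorem Fin.sub_one_ne_self (hk : 2 ≤ k) (i : Fin k) : i - 1 ≠ i := by
  rw [Ne, sub_eq_self, Fin.ext_iff, Fin.val_one', Fin.val_zero, Nat.mod_eq_of_lt hk]
  exact one_ne_zero

end Cycle

section StrongCycle

variable {m n : ℕ} [NeZero m] [NeZero n]

def strongCycleInNbrs (i : Fin m) (j : Fin n) : Finset (Fin m × Fin n) :=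
  {(i - 1, j - 1), (i, j - 1), (i - 1, j)}

theorem strongAdj_cycleAdj_iff {x : Fin m × Fin n} {i : Fin m} {j : Fin n} :
    strongAdj (cycleAdj m) (cycleAdj n) x (i, j) ↔ x ∈ strongCycleInNbrs i j := by
  obtain ⟨x₁, x₂⟩ := x
  simp [strongAdj, strongCycleInNbrs, cycleAdj_iff_s14]

theorem sum_strongCycleInNbrs (hm : 2 ≤ m) (hn : 2 ≤ n) (f : Fin m × Fin n → ℕ)
    (i : Fin m) (j : Fin n) :
    ∑ x ∈ strongCycleInNbrs i j, f x = f (i - 1, j - 1) + f (i, j - 1) + f (i - 1, j) := by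
  have hi := Fin.sub_one_ne_self hm i
  have hj := Fin.sub_one_ne_self hn j
  rw [strongCycleInNbrs, sum_insert (by simp [hi, hj]), sum_pair (by simp [hi.symm]), add_assoc]

theorem mul_le_two_mul_sum_of_isIDF (hm : 2 ≤ m) (hn : 2 ≤ n) {f : Fin m × Fin n → ℕ}
    (hf : IsIDF (strongAdj (cycleAdj m) (cycleAdj n)) f) : m * n ≤ 2 * ∑ v, f v := by
  have hlocal : ∀ i j, f (i, j) = 0 → 2 ≤ f (i - 1, j - 1) + f (i - 1, j) + f (i, j - 1) := by
    intro i j h0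
    have := hf.two_le_sum h0 fun x => strongAdj_cycleAdj_iff.1
    rw [sum_strongCycleInNbrs hm hn] at this
    omega
  have hrows : ∀ i : Fin m, n ≤ ∑ j, (f (i - 1, j) + f (i, j)) := fun i => by
    simpa using card_le_sum_add_of_perm (Equiv.subRight 1) (fun j => f (i - 1, j))
      (fun j => f (i, j)) (hlocal i)
  calc m * n = ∑ _i : Fin m, n := by simp
    _ ≤ ∑ i, ∑ j, (f (i - 1, j) + f (i, j)) := sum_le_sum fun i _ => hrows i
    _ = ∑ i, ∑ j, f (i - 1, j) + ∑ i, ∑ j, f (i, j) := by simp only [sum_add_distrib]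
    _ = 2 * ∑ v, f v := by
      have hshift : ∑ i, ∑ j, f (i - 1, j) = ∑ i, ∑ j, f (i, j) :=
        Equiv.sum_comp (Equiv.subRight 1) fun i => ∑ j, f (i, j)
      rw [hshift, Fintype.sum_prod_type, two_mul]

end StrongCycle

section Checkerboard

variable {m n : ℕ}

def checkerboard (v : Fin m × Fin n) : ℕ := if ((v.1 : ℕ) + v.2) % 2 = 0 then 1 else 0

theorem sum_range_ite_add_even (c n : ℕ) :
    ∑ j ∈ range n, (if (c + j) % 2 = 0 then 1 else 0) = (n + 1 - c % 2) / 2 := by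
  induction n with
  | zero => simp only [range_zero, sum_empty]; omega
  | succ n ih => rw [sum_range_succ, ih]; split <;> omega

theorem sum_range_half_sub_mod_two (m n : ℕ) :
    ∑ i ∈ range m, (n + 1 - i % 2) / 2 = (m * n + 1) / 2 := by
  induction m with
  | zero => simp
  | succ m ih =>
    rw [sum_range_succ, ih, add_mul, one_mul]
    have := Nat.mul_mod m n 2
    rcases Nat.mod_two_eq_zero_or_one m with hm | hm <;>
      rcases Nat.mod_two_eq_zero_or_one n with hn | hn <;>
      rw [hm, hn] at this <;> omega

theorem sum_checkerboard : ∑ v : Fin m × Fin n, checkerboard v = (m * n + 1) / 2 := by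
  rw [Fintype.sum_prod_type, ← sum_range_half_sub_mod_two,
    ← Fin.sum_univ_eq_sum_range fun i => (n + 1 - i % 2) / 2]
  refine sum_congr rfl fun i _ => ?_
  rw [← sum_range_ite_add_even,
    ← Fin.sum_univ_eq_sum_range fun j => if (i + j) % 2 = 0 then 1 else 0]
  rfl

theorem two_le_checkerboard_inNbrs [NeZero m] [NeZero n] {i : Fin m} {j : Fin n}
    (h : ((i : ℕ) + j) % 2 = 1) :
    2 ≤ checkerboard (i - 1, j - 1) + checkerboard (i, j - 1) + checkerboard (i - 1, j) := by
  have := i.isLt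
  have := j.isLt
  simp only [checkerboard, Fin.val_sub_one_eq_ite]
  split_ifs <;> omega

theorem isIDF_checkerboard [NeZero m] [NeZero n] (hm : 2 ≤ m) (hn : 2 ≤ n) :
    IsIDF (strongAdj (cycleAdj m) (cycleAdj n)) checkerboard := by
  refine isIDF_of_two_le_sum (fun v => by unfold checkerboard; split <;> omega) ?_
  rintro ⟨i, j⟩ h0
  refine ⟨strongCycleInNbrs i j, fun x hx => strongAdj_cycleAdj_iff.2 hx, ?_⟩
  rw [sum_strongCycleInNbrs hm hn]
  exact two_le_checkerboard_inNbrs (by dsimp only [checkerboard] at h0; split at h0 <;> omega)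

end Checkerboard

theorem stmt14 (m n : ℕ) (hm : 2 ≤ m) (hn : 2 ≤ n) :
    italianDomNum (Fin m × Fin n) (strongAdj (cycleAdj m) (cycleAdj n)) = (m * n + 1) / 2 := by
  have : NeZero m := ⟨by omega⟩
  have : NeZero n := ⟨by omega⟩
  refine italianDomNum_eq_of_isIDF (fun f hf => ?_) (isIDF_checkerboard hm hn) sum_checkerboard
  have := mul_le_two_mul_sum_of_isIDF hm hn hf
  omega
end
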